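/- Generalized Cheeger upper bound: the mean of the n smallest eigenvalues of the symmetric Laplacian Δ is at most the n-th isoperimetric constant: (1/n)∑_{k=1}^n λ_k ≤ ι_n, where λ_1 ≤ … ≤ λ_n are the smallest eigenvalues of Δ = id − (K+K*)/2 (self-adjoint on the π-weighted inner product space) and ι_n = min over n disjoint nonempty subsets {Q_i} of (1/n)∑_i ∂(Q_i)/π(Q_i). -/

import Mathlib

/-!
Conjugating by `f ↦ √π · f` turns `Δ` into a symmetric operator on `ℓ²(V)` whose eigenbasis is
`√π · F k`. For orthonormal `h₁, …, hₙ`, `∑ᵢ ⟪Δ hᵢ, hᵢ⟫ = ∑ₖ λₖ dₖ` with `dₖ = ∑ᵢ ⟪hᵢ, Fₖ⟫²`;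
Bessel gives `dₖ ≤ 1` and Parseval `∑ₖ dₖ = n`, so for increasing `λ` the sum is at least
`λ₁ + ⋯ + λₙ` (Ky Fan).
The normalized indicators of `n` disjoint nonempty sets `Qᵢ` are orthonormal, with Rayleigh
quotients `∂(Qᵢ)/π(Qᵢ)`.
-/

open Finset

/-- Outgoing boundary flow `∂(Q) = ∑_{u∈Q, v∉Q} K(u,v)π(u)`. -/
noncomputable def dpart {V : Type*} [Fintype V] [DecidableEq V]
    (K : V → V → ℝ) (π : V → ℝ) (Q : Finset V) : ℝ :=
  ∑ u ∈ Q, ∑ v ∈ Qᶜ, K u v * π u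

/-- `π(Q) = ∑_{u∈Q} π(u)`. -/
noncomputable def pim {V : Type*} (π : V → ℝ) (Q : Finset V) : ℝ :=
  ∑ u ∈ Q, π u

/-- The `n`-th isoperimetric constant: minimum of the mean normalized boundary over
families of `n` pairwise disjoint nonempty subsets of `V`. -/
noncomputable def iotaD {V : Type*} [Fintype V] [DecidableEq V]
    (K : V → V → ℝ) (π : V → ℝ) (n : ℕ) : ℝ :=
  sInf {x : ℝ | ∃ Q : Fin n → Finset V, (∀ i, (Q i).Nonempty) ∧
    Pairwise (Function.onFun Disjoint Q) ∧
    x = (∑ i, dpart K π (Q i) / pim π (Q i)) / n}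

/-- The `n`-th partition isoperimetric constant: minimum of the mean normalized boundary
over partitions of `V` into `n` nonempty parts. -/
noncomputable def iotaP {V : Type*} [Fintype V] [DecidableEq V]
    (K : V → V → ℝ) (π : V → ℝ) (n : ℕ) : ℝ :=
  sInf {x : ℝ | ∃ Q : Fin n → Finset V, (∀ i, (Q i).Nonempty) ∧
    Pairwise (Function.onFun Disjoint Q) ∧
    Finset.univ.biUnion Q = Finset.univ ∧
    x = (∑ i, dpart K π (Q i) / pim π (Q i)) / n}

/-- The symmetric Laplacian `Δ = id − (K + K*)/2` acting on `π`-weighted functions. -/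
noncomputable def DeltaOp {V : Type*} [Fintype V]
    (K : V → V → ℝ) (π : V → ℝ) (f : V → ℝ) : V → ℝ :=
  fun u => f u - (∑ v, (K u v + K v u * π v / π u) * f v) / 2

open scoped RealInnerProductSpace

theorem Fin.sum_castLE_eq_sum_ite {M : Type*} [AddCommMonoid M] {m n : ℕ} (hnm : n ≤ m)
    (f : Fin m → M) :
    ∑ i : Fin n, f (Fin.castLE hnm i) = ∑ k : Fin m, if (k : ℕ) < n then f k else 0 := by
  rw [← sum_filter]
  refine (sum_map univ (Fin.castLEEmb hnm) f).symm.trans (congrArg (∑ k ∈ ·, f k) ?_)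
  ext k
  simpa using ⟨fun ⟨i, hi⟩ => hi ▸ i.isLt, fun hk => ⟨⟨k, hk⟩, rfl⟩⟩

theorem Fin.sum_castLE_le_sum_mul {m n : ℕ} (hnm : n ≤ m) {lam d : Fin m → ℝ}
    (hlam : Monotone lam) (hd0 : ∀ k, 0 ≤ d k) (hd1 : ∀ k, d k ≤ 1) (hd : ∑ k, d k = n) :
    ∑ i : Fin n, lam (Fin.castLE hnm i) ≤ ∑ k, lam k * d k := by
  obtain ⟨μ, hμ⟩ : ∃ μ, ∀ k : Fin m, ((k : ℕ) < n → lam k ≤ μ) ∧ (n ≤ k → μ ≤ lam k) := by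
    rcases m with _ | m
    · exact ⟨0, fun k => k.elim0⟩
    · exact ⟨lam ⟨n - 1, by omega⟩, fun k =>
        ⟨fun hk => hlam (Fin.mk_le_mk.2 (by omega)), fun hk => hlam (Fin.mk_le_mk.2 (by omega))⟩⟩
  have hcount : ∑ k : Fin m, (if (k : ℕ) < n then 1 else 0 : ℝ) = n := by
    simpa using (Fin.sum_castLE_eq_sum_ite hnm fun _ => (1 : ℝ)).symm
  calc ∑ i : Fin n, lam (Fin.castLE hnm i)
      = ∑ k : Fin m, if (k : ℕ) < n then lam k else 0 := Fin.sum_castLE_eq_sum_ite hnm lam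
    _ ≤ ∑ k, (lam k * d k + μ * ((if (k : ℕ) < n then 1 else 0) - d k)) := by
      refine sum_le_sum fun k _ => ?_
      split_ifs with hk
      · nlinarith [(hμ k).1 hk, hd1 k]
      · nlinarith [(hμ k).2 (not_lt.1 hk), hd0 k]
    _ = ∑ k, lam k * d k := by
      rw [sum_add_distrib, ← mul_sum, sum_sub_distrib, hcount, hd, sub_self, mul_zero, add_zero]

theorem LinearMap.IsSymmetric.inner_apply_self_eq_sum {E : Type*} [NormedAddCommGroup E]
    [InnerProductSpace ℝ E] {ι : Type*} [Fintype ι] {T : E →ₗ[ℝ] E} (hT : T.IsSymmetric)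
    (b : OrthonormalBasis ι ℝ E) {lam : ι → ℝ} (heig : ∀ k, T (b k) = lam k • b k) (x : E) :
    ⟪T x, x⟫ = ∑ k, lam k * ⟪b k, x⟫ ^ 2 := by
  rw [← b.sum_inner_mul_inner]
  refine sum_congr rfl fun k _ => ?_
  rw [hT, heig, real_inner_smul_right, real_inner_comm]
  ring

theorem LinearMap.IsSymmetric.sum_eigenvalues_le_sum_inner {E : Type*} [NormedAddCommGroup E]
    [InnerProductSpace ℝ E] {m n : ℕ} (hnm : n ≤ m) {T : E →ₗ[ℝ] E} (hT : T.IsSymmetric)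
    (b : OrthonormalBasis (Fin m) ℝ E) {lam : Fin m → ℝ} (hlam : Monotone lam)
    (heig : ∀ k, T (b k) = lam k • b k) {h : Fin n → E} (hh : Orthonormal ℝ h) :
    ∑ i : Fin n, lam (Fin.castLE hnm i) ≤ ∑ i, ⟪T (h i), h i⟫ := by
  have hbessel (k : Fin m) : ∑ i, ⟪b k, h i⟫ ^ 2 ≤ 1 := by
    simpa [real_inner_comm, b.orthonormal.1 k] using hh.sum_inner_products_le (b k) (s := univ)
  have hparseval : ∑ k, ∑ i, ⟪b k, h i⟫ ^ 2 = n := by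
    rw [sum_comm]
    simp [b.sum_sq_inner_right, hh.1]
  calc ∑ i : Fin n, lam (Fin.castLE hnm i) ≤ ∑ k, lam k * ∑ i, ⟪b k, h i⟫ ^ 2 :=
        Fin.sum_castLE_le_sum_mul hnm hlam (fun k => by positivity) hbessel hparseval
    _ = ∑ i, ⟪T (h i), h i⟫ := by
      simp_rw [hT.inner_apply_self_eq_sum b heig, mul_sum]
      exact sum_comm

theorem pim_pos {V : Type*} {π : V → ℝ} (hπ : ∀ u, 0 < π u) {Q : Finset V} (hQ : Q.Nonempty) :
    0 < pim π Q :=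
  sum_pos (fun u _ => hπ u) hQ

section Laplacian

variable {V : Type*} [Fintype V] {K : V → V → ℝ} {π : V → ℝ}

variable (K π) in
noncomputable def DeltaOp.toLinearMap : (V → ℝ) →ₗ[ℝ] V → ℝ where
  toFun := DeltaOp K π
  map_add' f g := by
    ext u
    simp only [DeltaOp, Pi.add_apply, mul_add, sum_add_distrib]
    ring
  map_smul' c f := by
    ext u
    simp only [DeltaOp, Pi.smul_apply, smul_eq_mul, RingHom.id_apply, mul_left_comm _ c, ← mul_sum]
    ring

@[simp]
theorem DeltaOp.toLinearMap_apply (f : V → ℝ) : DeltaOp.toLinearMap K π f = DeltaOp K π f := rfl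

theorem sum_DeltaOp_mul_mul (hπ : ∀ u, π u ≠ 0) (f g : V → ℝ) :
    ∑ u, DeltaOp K π f u * g u * π u = ∑ u, f u * g u * π u
      - (∑ u, ∑ v, (K u v * π u + K v u * π v) * f v * g u) / 2 := by
  rw [sum_div, ← sum_sub_distrib]
  refine sum_congr rfl fun u _ => ?_
  have hflow : ∑ v, (K u v * π u + K v u * π v) * f v * g u
      = (∑ v, (K u v + K v u * π v / π u) * f v) * g u * π u := by
    rw [sum_mul, sum_mul]
    exact sum_congr rfl fun v _ => by field_simp [hπ u]
  rw [DeltaOp, hflow]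
  ring

theorem sum_DeltaOp_mul_mul_comm (hπ : ∀ u, π u ≠ 0) (f g : V → ℝ) :
    ∑ u, DeltaOp K π f u * g u * π u = ∑ u, f u * DeltaOp K π g u * π u := by
  simp_rw [mul_comm (f _)]
  rw [sum_DeltaOp_mul_mul hπ f g, sum_DeltaOp_mul_mul hπ g f, sum_comm (γ := V)]
  congr 1
  · exact sum_congr rfl fun u _ => by ring
  · congr 1
    exact sum_congr rfl fun u _ => sum_congr rfl fun v _ => by ring

noncomputable def sqrtWeight (hπ : ∀ u, 0 < π u) : (V → ℝ) ≃ₗ[ℝ] EuclideanSpace ℝ V where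
  toFun f := WithLp.toLp 2 fun u => √(π u) * f u
  map_add' f g := by ext u; simp [mul_add]
  map_smul' c f := by ext u; simp [mul_left_comm]
  invFun x u := x u / √(π u)
  left_inv f := by ext u; simp [(Real.sqrt_pos.2 (hπ u)).ne']
  right_inv x := by ext u; simp [mul_div_cancel₀ _ (Real.sqrt_pos.2 (hπ u)).ne']

theorem inner_sqrtWeight (hπ : ∀ u, 0 < π u) (f g : V → ℝ) :
    ⟪sqrtWeight hπ f, sqrtWeight hπ g⟫ = ∑ u, f u * g u * π u := by
  simp only [sqrtWeight, LinearEquiv.coe_mk, LinearMap.coe_mk, AddHom.coe_mk, PiLp.inner_apply]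
  refine sum_congr rfl fun u _ => ?_
  simp only [RCLike.inner_apply, conj_trivial]
  rw [mul_mul_mul_comm, Real.mul_self_sqrt (hπ u).le]
  ring

theorem isSymmetric_conj_DeltaOp (hπ : ∀ u, 0 < π u) :
    ((sqrtWeight hπ).conj (DeltaOp.toLinearMap K π)).IsSymmetric := by
  intro x y
  obtain ⟨f, rfl⟩ := (sqrtWeight hπ).surjective x
  obtain ⟨g, rfl⟩ := (sqrtWeight hπ).surjective y
  simp only [LinearEquiv.conj_apply_apply, LinearEquiv.symm_apply_apply, inner_sqrtWeight]
  exact sum_DeltaOp_mul_mul_comm (fun u => (hπ u).ne') f g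

theorem sum_mul_indicator_mul_indicator (w : V → V → ℝ) (Q : Finset V) :
    ∑ u, ∑ v, w u v * (Q : Set V).indicator 1 v * (Q : Set V).indicator 1 u
      = ∑ u ∈ Q, ∑ v ∈ Q, w u v := by
  classical
  simp [Set.indicator_apply, sum_ite_mem]

theorem sum_DeltaOp_indicator_mul_indicator [DecidableEq V] (hK1 : ∀ u, ∑ v, K u v = 1)
    (hπ : ∀ u, π u ≠ 0) (Q : Finset V) :
    ∑ u, DeltaOp K π ((Q : Set V).indicator 1) u * (Q : Set V).indicator 1 u * π u
      = dpart K π Q := by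
  rw [sum_DeltaOp_mul_mul hπ, sum_mul_indicator_mul_indicator]
  have hmass :
      ∑ u, (Q : Set V).indicator 1 u * (Q : Set V).indicator 1 u * π u = ∑ u ∈ Q, π u := by
    simp [Set.indicator_apply, sum_ite_mem]
  have hinner : ∑ u ∈ Q, ∑ v ∈ Q, (K u v * π u + K v u * π v)
      = 2 * ∑ u ∈ Q, ∑ v ∈ Q, K u v * π u := by
    simp only [sum_add_distrib, two_mul]
    exact congrArg _ sum_comm
  have hdpart : dpart K π Q = ∑ u ∈ Q, π u - ∑ u ∈ Q, ∑ v ∈ Q, K u v * π u := by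
    rw [dpart, eq_sub_iff_add_eq, ← sum_add_distrib]
    refine sum_congr rfl fun u _ => ?_
    rw [add_comm, sum_add_sum_compl, ← sum_mul, hK1, one_mul]
  rw [hmass, hinner, hdpart]
  ring

theorem inner_sqrtWeight_indicator [DecidableEq V] (hπ : ∀ u, 0 < π u) (A B : Finset V) :
    ⟪sqrtWeight hπ ((A : Set V).indicator 1), sqrtWeight hπ ((B : Set V).indicator 1)⟫
      = pim π (A ∩ B) := by
  rw [inner_sqrtWeight, pim, ← univ_inter (A ∩ B), ← sum_ite_mem]
  refine sum_congr rfl fun u _ => ?_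
  simp only [Set.indicator_apply, mem_coe, Pi.one_apply, mem_inter]
  split_ifs <;> simp_all

noncomputable def normalizedIndicator (hπ : ∀ u, 0 < π u) (Q : Finset V) : EuclideanSpace ℝ V :=
  (√(pim π Q))⁻¹ • sqrtWeight hπ ((Q : Set V).indicator 1)

theorem orthonormal_normalizedIndicator (hπ : ∀ u, 0 < π u) {ι : Type*} {Q : ι → Finset V}
    (hne : ∀ i, (Q i).Nonempty) (hdisj : Pairwise (Function.onFun Disjoint Q)) :
    Orthonormal ℝ fun i => normalizedIndicator hπ (Q i) := by
  classical
  refine orthonormal_iff_ite.2 fun i j => ?_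
  simp only [normalizedIndicator, real_inner_smul_left, real_inner_smul_right,
    inner_sqrtWeight_indicator]
  split_ifs with hij
  · subst hij
    rw [inter_self, ← mul_assoc, ← mul_inv, Real.mul_self_sqrt (pim_pos hπ (hne i)).le,
      inv_mul_cancel₀ (pim_pos hπ (hne i)).ne']
  · rw [disjoint_iff_inter_eq_empty.1 (hdisj hij), show pim π ∅ = 0 from sum_empty, mul_zero,
      mul_zero]

theorem inner_conj_DeltaOp_normalizedIndicator [DecidableEq V] (hK1 : ∀ u, ∑ v, K u v = 1)
    (hπ : ∀ u, 0 < π u) {Q : Finset V} (hQ : Q.Nonempty) :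
    ⟪(sqrtWeight hπ).conj (DeltaOp.toLinearMap K π) (normalizedIndicator hπ Q),
      normalizedIndicator hπ Q⟫ = dpart K π Q / pim π Q := by
  simp only [normalizedIndicator, map_smul, real_inner_smul_left, real_inner_smul_right,
    LinearEquiv.conj_apply_apply, LinearEquiv.symm_apply_apply, inner_sqrtWeight,
    DeltaOp.toLinearMap_apply]
  rw [sum_DeltaOp_indicator_mul_indicator hK1 (fun u => (hπ u).ne'), ← mul_assoc, ← mul_inv,
    Real.mul_self_sqrt (pim_pos hπ hQ).le, inv_mul_eq_div]

end Laplacian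

theorem sum_eigenvalues_le_sum_dpart_div_pim {V : Type*} [Fintype V] [DecidableEq V]
    {K : V → V → ℝ} {π : V → ℝ} (hK1 : ∀ u, ∑ v, K u v = 1) (hπ : ∀ u, 0 < π u)
    {lam : Fin (Fintype.card V) → ℝ} (hmono : Monotone lam) {F : Fin (Fintype.card V) → V → ℝ}
    (heig : ∀ k, DeltaOp K π (F k) = fun u => lam k * F k u)
    (horth : ∀ j k, ∑ u, F j u * F k u * π u = if j = k then 1 else 0)
    {n : ℕ} (hcard : n ≤ Fintype.card V) {Q : Fin n → Finset V} (hne : ∀ i, (Q i).Nonempty)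
    (hdisj : Pairwise (Function.onFun Disjoint Q)) :
    ∑ i : Fin n, lam (Fin.castLE hcard i) ≤ ∑ i, dpart K π (Q i) / pim π (Q i) := by
  set W := sqrtWeight hπ
  have hWF : Orthonormal ℝ (W ∘ F) :=
    orthonormal_iff_ite.2 fun j k => (inner_sqrtWeight hπ _ _).trans (horth j k)
  let b : OrthonormalBasis (Fin (Fintype.card V)) ℝ (EuclideanSpace ℝ V) :=
    .mk hWF (hWF.linearIndependent.span_eq_top_of_card_eq_finrank' (by simp)).ge
  have heigT : ∀ k, W.conj (DeltaOp.toLinearMap K π) (b k) = lam k • b k := by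
    intro k
    simp only [b, OrthonormalBasis.coe_mk, Function.comp_apply, LinearEquiv.conj_apply_apply,
      LinearEquiv.symm_apply_apply, DeltaOp.toLinearMap_apply, heig]
    exact W.map_smul (lam k) (F k)
  calc ∑ i : Fin n, lam (Fin.castLE hcard i)
      ≤ ∑ i, ⟪W.conj (DeltaOp.toLinearMap K π) (normalizedIndicator hπ (Q i)),
          normalizedIndicator hπ (Q i)⟫ :=
        (isSymmetric_conj_DeltaOp hπ).sum_eigenvalues_le_sum_inner hcard b hmono heigT
          (orthonormal_normalizedIndicator hπ hne hdisj)
    _ = ∑ i, dpart K π (Q i) / pim π (Q i) :=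
        sum_congr rfl fun i _ => inner_conj_DeltaOp_normalizedIndicator hK1 hπ (hne i)

theorem mean_eigenvalues_le_iota_general {V : Type*} [Fintype V] [DecidableEq V]
    (K : V → V → ℝ) (π : V → ℝ)
    (hK1 : ∀ u, ∑ v, K u v = 1) (hπ : ∀ u, 0 < π u)
    (lam : Fin (Fintype.card V) → ℝ) (hmono : Monotone lam)
    (F : Fin (Fintype.card V) → V → ℝ)
    (heig : ∀ k, DeltaOp K π (F k) = fun u => lam k * F k u)
    (horth : ∀ j k, ∑ u, F j u * F k u * π u = if j = k then 1 else 0)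
    (n : ℕ) (hcard : n ≤ Fintype.card V) :
    (∑ i : Fin n, lam (Fin.castLE hcard i)) / n ≤ iotaD K π n := by
  refine le_csInf ?_ ?_
  · obtain ⟨f⟩ : Nonempty (Fin n ↪ V) :=
      Function.Embedding.nonempty_iff_card_le.2 (by simpa using hcard)
    exact ⟨_, fun i => {f i}, fun i => singleton_nonempty _,
      fun i j hij => disjoint_singleton.2 (f.injective.ne hij), rfl⟩
  · rintro x ⟨Q, hne, hdisj, rfl⟩
    exact div_le_div_of_nonneg_right
      (sum_eigenvalues_le_sum_dpart_div_pim hK1 hπ hmono heig horth hcard hne hdisj) n.cast_nonneg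

theorem mean_eigenvalues_le_iota {V : Type*} [Fintype V] [DecidableEq V]
    (K : V → V → ℝ) (π : V → ℝ)
    (hK0 : ∀ u v, 0 ≤ K u v) (hK1 : ∀ u, ∑ v, K u v = 1)
    (hπ : ∀ u, 0 < π u) (hπ1 : ∑ u, π u = 1)
    (hstat : ∀ v, ∑ u, π u * K u v = π v)
    (lam : Fin (Fintype.card V) → ℝ) (hmono : Monotone lam)
    (F : Fin (Fintype.card V) → V → ℝ)
    (heig : ∀ k, DeltaOp K π (F k) = fun u => lam k * F k u)
    (horth : ∀ j k, ∑ u, F j u * F k u * π u = if j = k then 1 else 0)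
    (n : ℕ) (hn : 0 < n) (hcard : n ≤ Fintype.card V) :
    (∑ i : Fin n, lam (Fin.castLE hcard i)) / n ≤ iotaD K π n :=
  mean_eigenvalues_le_iota_general K π hK1 hπ lam hmono F heig horth n hcard
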